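/- The sequence of ratios dp(P_{n+1},2) / dp(P_n,2) converges as n → ∞ to the golden ratio (1+√5)/2, where dp(P_n,2) is the number of domatic partitions of the path P_n with exactly 2 parts. -/

import Mathlib

/-!
A partition of `V` into two dominating sets is `{S, Sᶜ}` where every vertex has a neighbour on
the other side, i.e. a 2-colouring in which every vertex has a neighbour of the other colour;
fixing the colour of one vertex removes the symmetry `S ↔ Sᶜ`. On a path a colouring with fixed
first colour is determined by its set of bichromatic edges, and the condition says exactly that
these edges cover every vertex. Edge covers of the path on `k + 2` vertices are counted by the
Fibonacci number `F (k + 1)`, and `F (n + 1) / F n → φ` because `F (n + 1) - φ F n = ψ ^ n`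
with `|ψ| < 1`.
-/

/-- `S` is a dominating set of `G`: every vertex outside `S` has a neighbor in `S`. -/
def IsDominating {V : Type*} (G : SimpleGraph V) (S : Set V) : Prop :=
  ∀ v, v ∉ S → ∃ u ∈ S, G.Adj v u

/-- A domatic partition of `G`: a partition of the vertex set into
(pairwise disjoint, nonempty) dominating sets. -/
def IsDomaticPartition {V : Type*} (G : SimpleGraph V) (P : Set (Set V)) : Prop :=
  Setoid.IsPartition P ∧ ∀ S ∈ P, IsDominating G S

/-- `dp G i` is the number of domatic partitions of `G` with exactly `i` parts. -/
noncomputable def dp {V : Type*} (G : SimpleGraph V) (i : ℕ) : ℕ :=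
  {P : Set (Set V) | IsDomaticPartition G P ∧ P.ncard = i}.ncard

open SimpleGraph Filter Topology

namespace Setoid

variable {α : Type*}

lemma isPartition_pair_compl {S : Set α} (hS : S.Nonempty) (hSc : Sᶜ.Nonempty) :
    IsPartition ({S, Sᶜ} : Set (Set α)) := by
  refine ⟨?_, fun a => ?_⟩
  · rintro (h | h)
    · exact hS.ne_empty h.symm
    · exact hSc.ne_empty h.symm
  · by_cases ha : a ∈ S
    · refine ⟨S, ⟨.inl rfl, ha⟩, ?_⟩
      rintro T ⟨rfl | rfl, haT⟩
      · rfl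
      · exact absurd ha haT
    · refine ⟨Sᶜ, ⟨.inr rfl, ha⟩, ?_⟩
      rintro T ⟨rfl | rfl, haT⟩
      · exact absurd haT ha
      · rfl

lemma IsPartition.eq_compl_of_pair {A B : Set α} (h : IsPartition ({A, B} : Set (Set α)))
    (hAB : A ≠ B) : B = Aᶜ := by
  refine (IsCompl.compl_eq ⟨?_, ?_⟩).symm
  · exact h.pairwiseDisjoint (by simp) (by simp) hAB
  · rw [codisjoint_iff]
    simpa using h.sUnion_eq_univ

end Setoid

section Domatic

variable {V : Type*} (G : SimpleGraph V)

lemma dp_two_eq_ncard (v₀ : V) :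
    dp G 2 = {S : Set V | v₀ ∈ S ∧ IsDominating G S ∧ IsDominating G Sᶜ}.ncard := by
  have hinj : Set.InjOn (fun S : Set V => ({S, Sᶜ} : Set (Set V)))
      {S | v₀ ∈ S ∧ IsDominating G S ∧ IsDominating G Sᶜ} := by
    rintro S ⟨hS, -⟩ T ⟨hT, -⟩ hST
    have : S ∈ ({T, Tᶜ} : Set (Set V)) := by
      rw [← show ({S, Sᶜ} : Set (Set V)) = {T, Tᶜ} from hST]; exact .inl rfl
    rcases this with rfl | rfl
    · rfl
    · exact absurd hT hS
  rw [dp, ← hinj.ncard_image]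
  congr 1
  ext P
  constructor
  · rintro ⟨⟨hP, hdom⟩, hcard⟩
    obtain ⟨A, B, hAB, rfl⟩ := Set.ncard_eq_two.1 hcard
    obtain rfl := hP.eq_compl_of_pair hAB
    by_cases hA : v₀ ∈ A
    · exact ⟨A, ⟨hA, hdom A (.inl rfl), hdom Aᶜ (.inr rfl)⟩, rfl⟩
    · refine ⟨Aᶜ, ⟨hA, hdom Aᶜ (.inr rfl), ?_⟩, ?_⟩
      · rw [compl_compl]; exact hdom A (.inl rfl)
      · simp only [compl_compl, Set.pair_comm]
  · rintro ⟨S, ⟨hS, hdom, hdomc⟩, rfl⟩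
    obtain ⟨u, hu, -⟩ := hdomc v₀ (Set.notMem_compl_iff.2 hS)
    refine ⟨⟨Setoid.isPartition_pair_compl ⟨v₀, hS⟩ ⟨u, hu⟩, ?_⟩, Set.ncard_pair ?_⟩
    · rintro T (rfl | rfl) <;> assumption
    · exact fun h => (h ▸ hS : v₀ ∈ Sᶜ) hS

def IsDomaticColoring (c : V → Bool) : Prop :=
  ∀ v, ∃ u, G.Adj v u ∧ c u ≠ c v

lemma isDominating_and_compl_iff (c : V → Bool) :
    IsDominating G {v | c v = true} ∧ IsDominating G {v | c v = true}ᶜ ↔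
      IsDomaticColoring G c := by
  simp only [IsDominating, IsDomaticColoring, Set.mem_ofPred_eq, Set.mem_compl_iff,
    Bool.not_eq_true, Bool.not_eq_false]
  constructor
  · rintro ⟨hT, hF⟩ v
    cases hv : c v
    · obtain ⟨u, hu, huv⟩ := hT v hv
      exact ⟨u, huv, by simp [hu]⟩
    · obtain ⟨u, hu, huv⟩ := hF v hv
      exact ⟨u, huv, by simp [hu]⟩
  · intro h
    refine ⟨fun v hv => ?_, fun v hv => ?_⟩ <;>
    · obtain ⟨u, huv, hne⟩ := h v
      exact ⟨u, by simpa [hv] using hne, huv⟩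

lemma dp_two_eq_ncard_isDomaticColoring (v₀ : V) :
    dp G 2 = {c : V → Bool | c v₀ = true ∧ IsDomaticColoring G c}.ncard := by
  classical
  have hinj : Function.Injective fun c : V → Bool => {v | c v = true} := fun c c' h =>
    funext fun v => Bool.eq_iff_iff.2 (Set.ext_iff.1 h v)
  rw [dp_two_eq_ncard G v₀, ← Set.ncard_image_of_injective _ hinj]
  congr 1
  ext S
  constructor
  · rintro ⟨hS, hdom⟩
    refine ⟨fun v => decide (v ∈ S), ⟨by simpa using hS, ?_⟩, by simp⟩
    rw [← isDominating_and_compl_iff]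
    simpa using hdom
  · rintro ⟨c, ⟨hc, hdom⟩, rfl⟩
    exact ⟨hc, (isDominating_and_compl_iff G c).2 hdom⟩

end Domatic

lemma Set.ncard_setOf_fin_cons_bool {n : ℕ} (P : (Fin (n + 1) → Bool) → Prop) :
    {d | P d}.ncard =
      {d | P (Fin.cons true d)}.ncard + {d | P (Fin.cons false d)}.ncard := by
  have hsplit : {d | P d} = Fin.cons true '' {d | P (Fin.cons true d)} ∪
      Fin.cons false '' {d | P (Fin.cons false d)} := by
    ext d
    rw [← Fin.cons_self_tail d]
    cases d 0 <;> simp [Fin.cons_right_injective _ |>.eq_iff]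
  rw [hsplit, Set.ncard_union_eq, Set.ncard_image_of_injective _ (Fin.cons_right_injective _),
    Set.ncard_image_of_injective _ (Fin.cons_right_injective _)]
  exact Set.disjoint_left.2 fun _ ⟨_, _, h⟩ ⟨_, _, h'⟩ => by
    simpa using congrFun (h.trans h'.symm) 0

section PathEdgeCovers

variable {k : ℕ}

/-- `d i` marks the edge `{i, i + 1}` of the path on `k + 2` vertices; `CoversTail d` says that
every vertex except possibly `0` lies on a marked edge. -/
def CoversTail (d : Fin (k + 1) → Bool) : Prop :=
  d (Fin.last k) = true ∧ ∀ i : Fin k, d i.castSucc = true ∨ d i.succ = true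

def IsPathEdgeCover (d : Fin (k + 1) → Bool) : Prop :=
  d 0 = true ∧ CoversTail d

lemma isPathEdgeCover_iff (d : Fin (k + 1) → Bool) :
    IsPathEdgeCover d ↔
      ∀ v : Fin (k + 2), ∃ i : Fin (k + 1), (i.castSucc = v ∨ i.succ = v) ∧ d i = true := by
  constructor
  · rintro ⟨h0, hlast, hmid⟩ v
    induction v using Fin.cases with
    | zero => exact ⟨0, .inl rfl, h0⟩
    | succ v =>
      induction v using Fin.lastCases with
      | last => exact ⟨Fin.last k, .inr rfl, hlast⟩
      | cast i =>
        rcases hmid i with h | h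
        · exact ⟨i.castSucc, .inr rfl, h⟩
        · exact ⟨i.succ, .inl (Fin.succ_castSucc i).symm, h⟩
  · intro h
    refine ⟨?_, ?_, fun i => ?_⟩
    · obtain ⟨i, hi | hi, hd⟩ := h 0
      · rwa [← Fin.castSucc_eq_zero_iff.1 hi]
      · exact absurd hi (Fin.succ_ne_zero i)
    · obtain ⟨i, hi | hi, hd⟩ := h (Fin.last (k + 1))
      · exact absurd hi (Fin.castSucc_lt_last i).ne
      · rwa [← Fin.succ_inj.1 (hi.trans (Fin.succ_last k).symm)]
    · obtain ⟨j, hj | hj, hd⟩ := h i.succ.castSucc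
      · rw [Fin.castSucc_inj.1 hj] at hd; exact .inr hd
      · rw [← Fin.succ_castSucc, Fin.succ_inj] at hj; rw [hj] at hd; exact .inl hd

lemma coversTail_cons (b : Bool) (d : Fin (k + 1) → Bool) :
    CoversTail (Fin.cons b d : Fin (k + 2) → Bool) ↔
      (b = true ∨ d 0 = true) ∧ CoversTail d := by
  simp [CoversTail, Fin.forall_fin_succ, ← Fin.succ_last, and_left_comm]

lemma isPathEdgeCover_cons (b : Bool) (d : Fin (k + 1) → Bool) :
    IsPathEdgeCover (Fin.cons b d : Fin (k + 2) → Bool) ↔ b = true ∧ CoversTail d := by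
  simp +contextual [IsPathEdgeCover, coversTail_cons]

end PathEdgeCovers

lemma ncard_isPathEdgeCover_and_coversTail (k : ℕ) :
    {d : Fin (k + 1) → Bool | IsPathEdgeCover d}.ncard = Nat.fib (k + 1) ∧
      {d : Fin (k + 1) → Bool | CoversTail d}.ncard = Nat.fib (k + 2) := by
  induction k with
  | zero =>
    rw [Set.ncard_setOf_fin_cons_bool IsPathEdgeCover, Set.ncard_setOf_fin_cons_bool CoversTail]
    simp [IsPathEdgeCover, CoversTail]
  | succ k ih =>
    rw [Set.ncard_setOf_fin_cons_bool IsPathEdgeCover, Set.ncard_setOf_fin_cons_bool CoversTail]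
    simp only [IsPathEdgeCover] at ih
    simp only [isPathEdgeCover_cons, coversTail_cons, ih, Nat.fib_add_two, true_and, true_or,
      false_or, Bool.false_eq_true, false_and, Set.ofPred_false, Set.ncard_empty, add_zero]
    omega

section PathColorings

variable {n : ℕ}

def edgeFlips (c : Fin (n + 1) → Bool) (i : Fin n) : Bool :=
  c i.castSucc != c i.succ

lemma bijective_zero_edgeFlips :
    Function.Bijective fun c : Fin (n + 1) → Bool => (c 0, edgeFlips c) := by
  refine (Fintype.bijective_iff_injective_and_card _).2 ⟨fun c c' h => ?_, by simp [pow_succ']⟩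
  simp only [Prod.mk.injEq] at h
  obtain ⟨h0, hflips⟩ := h
  funext i
  induction i using Fin.induction with
  | zero => exact h0
  | succ i ih =>
    have := congrFun hflips i
    simp only [edgeFlips, ih] at this
    simpa using this

lemma exists_pathGraph_adj_ne_iff (c : Fin (n + 1) → Bool) (v : Fin (n + 1)) :
    (∃ u, (pathGraph (n + 1)).Adj v u ∧ c u ≠ c v) ↔
      ∃ i : Fin n, (i.castSucc = v ∨ i.succ = v) ∧ edgeFlips c i = true := by
  simp only [pathGraph_adj, edgeFlips, bne_iff_ne]
  constructor
  · rintro ⟨u, hadj | hadj, hne⟩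
    · refine ⟨⟨v, by omega⟩, .inl rfl, ?_⟩
      rw [show Fin.succ ⟨v, _⟩ = u from Fin.ext (by simp; omega)]
      exact hne.symm
    · refine ⟨⟨u, by omega⟩, .inr (Fin.ext (by simp; omega)), ?_⟩
      rw [show Fin.succ ⟨u, _⟩ = v from Fin.ext (by simp; omega)]
      exact hne
  · rintro ⟨i, rfl | rfl, hne⟩
    · exact ⟨i.succ, .inl (by simp), hne.symm⟩
    · exact ⟨i.castSucc, .inr (by simp), hne⟩

end PathColorings

lemma isDomaticColoring_pathGraph_iff {k : ℕ} (c : Fin (k + 2) → Bool) :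
    IsDomaticColoring (pathGraph (k + 2)) c ↔ IsPathEdgeCover (edgeFlips c) := by
  rw [isPathEdgeCover_iff]
  exact forall_congr' (exists_pathGraph_adj_ne_iff c)

lemma dp_pathGraph_two (k : ℕ) : dp (pathGraph (k + 2)) 2 = Nat.fib (k + 1) := by
  have hflips := bijective_zero_edgeFlips (n := k + 1)
  have hinj : Set.InjOn edgeFlips
      {c : Fin (k + 2) → Bool | c 0 = true ∧ IsDomaticColoring (pathGraph (k + 2)) c} :=
    fun c hc c' hc' h => hflips.1 (Prod.ext (hc.1.trans hc'.1.symm) h)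
  rw [dp_two_eq_ncard_isDomaticColoring _ 0, ← hinj.ncard_image,
    ← (ncard_isPathEdgeCover_and_coversTail k).1]
  congr 1
  ext d
  constructor
  · rintro ⟨c, ⟨-, hc⟩, rfl⟩
    exact (isDomaticColoring_pathGraph_iff c).1 hc
  · intro hd
    obtain ⟨c, hc⟩ := hflips.2 (true, d)
    simp only [Prod.mk.injEq] at hc
    exact ⟨c, ⟨hc.1, (isDomaticColoring_pathGraph_iff c).2 (hc.2 ▸ hd)⟩, hc.2⟩

open Real in
lemma tendsto_fib_succ_div_fib :
    Tendsto (fun n => (Nat.fib (n + 1) : ℝ) / Nat.fib n) atTop (𝓝 goldenRatio) := by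
  have hfib : Tendsto Nat.fib atTop atTop :=
    Nat.fib_mono.tendsto_atTop_atTop fun b =>
      ⟨b + 2, by have := Nat.le_fib_add_one (b + 2); omega⟩
  have hconj : Tendsto (fun n => goldenConj ^ n / Nat.fib n) atTop (𝓝 0) :=
    (tendsto_pow_atTop_nhds_zero_of_abs_lt_one
      (abs_lt.2 ⟨neg_one_lt_goldenConj, goldenConj_neg.trans one_pos⟩)).div_atTop
      (tendsto_natCast_atTop_atTop.comp hfib)
  have hlim :
      Tendsto (fun n => goldenRatio + goldenConj ^ n / Nat.fib n) atTop (𝓝 goldenRatio) := by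
    simpa using hconj.const_add goldenRatio
  refine hlim.congr' ?_
  filter_upwards [eventually_ne_atTop 0] with n hn
  have : (Nat.fib n : ℝ) ≠ 0 := by simpa using hn
  rw [← fib_succ_sub_goldenRatio_mul_fib n]
  field_simp
  ring

/-- The ratios `dp(P_{n+1},2) / dp(P_n,2)` converge to the golden ratio
`(1 + √5)/2` as `n → ∞`. -/
theorem dp_path_ratio_tendsto_goldenRatio :
    Filter.Tendsto
      (fun n : ℕ =>
        (dp (SimpleGraph.pathGraph (n + 1)) 2 : ℝ) /
          (dp (SimpleGraph.pathGraph n) 2 : ℝ))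
      Filter.atTop (nhds ((1 + Real.sqrt 5) / 2)) := by
  rw [← tendsto_add_atTop_iff_nat 2]
  simp only [dp_pathGraph_two]
  exact (tendsto_add_atTop_iff_nat 1).2 tendsto_fib_succ_div_fib
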